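/- Under the constraints θ_{0x} = 2πm + νπ, θ_{0y} = 2πt + (1-ν)π (ν ∈ {0,1}), with A_m = R_z(ζ'_m)R_y(θ_{0m})R_z(φ_m), the anticommutator of A = A_xA_y and B (as defined) equals -θ_{1y}(R_z(-2φ_y) + R_z(2ζ'_x + 2(-1)^ν φ_x + 2(-1)^ν ζ'_y))σ_y - θ_{1x}(R_z(2ζ'_x) + R_z(2(-1)^ν ζ'_y - 2φ_y + 2(-1)^ν φ_x))σ_y. -/

import Mathlib

open Matrix

noncomputable section

def σy : Matrix (Fin 2) (Fin 2) ℂ := !![0, -Complex.I; Complex.I, 0]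
def σz : Matrix (Fin 2) (Fin 2) ℂ := !![1, 0; 0, -1]
def Rz (α : ℝ) : Matrix (Fin 2) (Fin 2) ℂ := NormedSpace.exp ((-(Complex.I * (α : ℂ) / 2)) • σz)
def Ry (β : ℝ) : Matrix (Fin 2) (Fin 2) ℂ := NormedSpace.exp ((-(Complex.I * (β : ℂ) / 2)) • σy)

def Am (ζ θ φ : ℝ) : Matrix (Fin 2) (Fin 2) ℂ := Rz ζ * Ry θ * Rz φ

def Bm (ζ θ0 φ ζ1 θ1 φ1 : ℝ) : Matrix (Fin 2) (Fin 2) ℂ :=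
  (ζ1 : ℂ) • (σz * Am ζ θ0 φ) + (θ1 : ℂ) • (σy * Rz (-(2 * ζ)) * Am ζ θ0 φ) +
    (φ1 : ℂ) • (Am ζ θ0 φ * σz)

/-! At these angles one of `Ry θ0x`, `Ry θ0y` is `±1` and the other is `±i σy`, so
`A = Ax Ay = κ • (Rz (p - φy) * σy)` with `κ² = -1` and `p = ζx + (-1)^ν (φx + ζy)`. Such an `A`
anticommutes with `σz`, hence also with `σz A`, `A σz` and `Ax σz Ay` (one of `Ax`, `Ay` commutes
with `σz`): the `ζ1`- and `φ1`-parts of `B` drop out of `{A, B}`. Since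
`σy Rz(-2ζ) Am ζ θ φ = Am ζ θ (-φ) σy`, the `θ1`-parts of `B` are multiples `κ • Rz q`, and
`{κ Rz p σy, κ Rz q} = -(Rz (p - q) + Rz (p + q)) σy`. -/

open Complex Real

lemma σz_eq_diagonal : σz = diagonal ![1, -1] := by
  ext i j; fin_cases i <;> fin_cases j <;> rfl

lemma Rz_eq_diagonal (α : ℝ) : Rz α = diagonal ![cexp (-(I * α / 2)), cexp (I * α / 2)] := by
  rw [Rz, σz_eq_diagonal, ← diagonal_smul, Matrix.exp_diagonal]
  congr 1
  ext i; fin_cases i <;> simp [Complex.exp_eq_exp_ℂ]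

lemma Rz_add (a b : ℝ) : Rz (a + b) = Rz a * Rz b := by
  simp only [Rz_eq_diagonal, diagonal_mul_diagonal]
  congr 1; ext i; fin_cases i <;> simp [← Complex.exp_add] <;> ring_nf

lemma σz_mul_Rz (α : ℝ) : σz * Rz α = Rz α * σz := by
  simp only [σz_eq_diagonal, Rz_eq_diagonal, diagonal_mul_diagonal, mul_comm]

lemma σy_mul_Rz (α : ℝ) : σy * Rz α = Rz (-α) * σy := by
  ext i j; fin_cases i <;> fin_cases j <;> simp [σy, Rz_eq_diagonal, neg_div, mul_comm]

lemma σy_mul_σy : σy * σy = 1 := by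
  ext i j; fin_cases i <;> fin_cases j <;> simp [σy]

lemma σz_mul_σy : σz * σy = -(σy * σz) := by
  ext i j; fin_cases i <;> fin_cases j <;> simp [σy, σz]

lemma Rz_pi : Rz π = -I • σz := by
  ext i j; fin_cases i <;> fin_cases j <;> simp [σz, Rz_eq_diagonal]
  · rw [show -(I * π / 2) = -π / 2 * I by ring, exp_neg_pi_div_two_mul_I]
  · rw [show I * π / 2 = π / 2 * I by ring, exp_pi_div_two_mul_I]

lemma Rz_two_pi_mul_int (k : ℤ) : Rz (2 * π * k) = (-1 : ℂ) ^ k • 1 := by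
  ext i j; fin_cases i <;> fin_cases j <;> simp [Rz_eq_diagonal]
  · rw [show -(I * (2 * π * k) / 2) = ((-k : ℤ) : ℂ) * (π * I) by push_cast; ring, exp_int_mul,
      exp_pi_mul_I, _root_.zpow_neg, ← _root_.inv_zpow, inv_neg_one]
  · rw [show I * (2 * π * k) / 2 = (k : ℂ) * (π * I) by ring, exp_int_mul, exp_pi_mul_I]

def σyEigenbasis : Matrix (Fin 2) (Fin 2) ℂ := !![1, 1; I, -I]

lemma isUnit_det_σyEigenbasis : IsUnit σyEigenbasis.det := by
  have h : σyEigenbasis.det = -(2 * I) := by simp [σyEigenbasis, det_fin_two_of]; ring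
  simp [h, I_ne_zero]

lemma σy_eq_conj_σz : σy = σyEigenbasis * σz * σyEigenbasis⁻¹ := by
  have h : σy * σyEigenbasis = σyEigenbasis * σz := by
    ext i j; fin_cases i <;> fin_cases j <;> simp [σy, σz, σyEigenbasis]
  rw [← h, mul_nonsing_inv_cancel_right _ _ isUnit_det_σyEigenbasis]

lemma Ry_eq_conj_Rz (β : ℝ) : Ry β = σyEigenbasis * Rz β * σyEigenbasis⁻¹ := by
  rw [Ry, Rz, σy_eq_conj_σz,
    ← Matrix.exp_conj _ _ ((isUnit_iff_isUnit_det _).2 isUnit_det_σyEigenbasis), Matrix.mul_smul,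
    Matrix.smul_mul]

lemma Ry_two_pi_mul_int (k : ℤ) : Ry (2 * π * k) = (-1 : ℂ) ^ k • 1 := by
  rw [Ry_eq_conj_Rz, Rz_two_pi_mul_int, Matrix.mul_smul, Matrix.mul_one, Matrix.smul_mul,
    mul_nonsing_inv _ isUnit_det_σyEigenbasis]

lemma Ry_two_pi_mul_int_add_pi (k : ℤ) : Ry (2 * π * k + π) = ((-1 : ℂ) ^ k * -I) • σy := by
  rw [Ry_eq_conj_Rz, Rz_add, Rz_two_pi_mul_int, Rz_pi, smul_mul_smul_comm, Matrix.one_mul,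
    Matrix.mul_smul, Matrix.smul_mul, ← σy_eq_conj_σz]

lemma Am_two_pi_mul_int (ζ φ : ℝ) (k : ℤ) : Am ζ (2 * π * k) φ = (-1 : ℂ) ^ k • Rz (ζ + φ) := by
  rw [Am, Ry_two_pi_mul_int, Rz_add, Matrix.mul_smul, Matrix.mul_one, Matrix.smul_mul]

lemma Am_two_pi_mul_int_add_pi (ζ φ : ℝ) (k : ℤ) :
    Am ζ (2 * π * k + π) φ = ((-1 : ℂ) ^ k * -I) • (Rz (ζ - φ) * σy) := by
  rw [Am, Ry_two_pi_mul_int_add_pi, Matrix.mul_smul, Matrix.smul_mul, Matrix.mul_assoc, σy_mul_Rz,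
    ← Matrix.mul_assoc, ← Rz_add, sub_eq_add_neg]

lemma commute_σy_Ry (θ : ℝ) : Commute σy (Ry θ) :=
  ((Commute.refl σy).smul_right _).exp_right

lemma σy_mul_Rz_mul_Am (ζ θ φ : ℝ) : σy * Rz (-(2 * ζ)) * Am ζ θ φ = Am ζ θ (-φ) * σy := by
  calc σy * Rz (-(2 * ζ)) * Am ζ θ φ = σy * Rz (-ζ) * Ry θ * Rz φ := by
        rw [show -ζ = -(2 * ζ) + ζ by ring, Rz_add, Am]; simp only [Matrix.mul_assoc]
    _ = Rz ζ * (σy * Ry θ) * Rz φ := by rw [σy_mul_Rz, neg_neg]; simp only [Matrix.mul_assoc]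
    _ = Rz ζ * Ry θ * (σy * Rz φ) := by rw [(commute_σy_Ry θ).eq]; simp only [Matrix.mul_assoc]
    _ = Am ζ θ (-φ) * σy := by rw [σy_mul_Rz, Am]; simp only [Matrix.mul_assoc]

lemma commute_σz_Am_two_pi_mul_int (ζ φ : ℝ) (k : ℤ) : Commute σz (Am ζ (2 * π * k) φ) := by
  rw [Am_two_pi_mul_int]
  exact (show Commute σz (Rz (ζ + φ)) from σz_mul_Rz _).smul_right _

lemma σz_mul_Rz_mul_σy (p : ℝ) : σz * (Rz p * σy) = -(Rz p * σy * σz) := by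
  rw [← Matrix.mul_assoc, σz_mul_Rz, Matrix.mul_assoc, σz_mul_σy, Matrix.mul_neg, Matrix.mul_assoc]

lemma smul_Rz_mul_σy_anticomm (κ : ℂ) (hκ : κ * κ = -1) (p q : ℝ) :
    κ • (Rz p * σy) * (κ • Rz q) + κ • Rz q * (κ • (Rz p * σy)) =
      -((Rz (p - q) + Rz (p + q)) * σy) := by
  rw [smul_mul_smul_comm, smul_mul_smul_comm, hκ, Matrix.mul_assoc, σy_mul_Rz, ← Matrix.mul_assoc,
    ← Rz_add, ← Matrix.mul_assoc, ← Rz_add, neg_one_smul, neg_one_smul, ← neg_add, ← add_mul,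
    ← sub_eq_add_neg, add_comm q]

lemma Am_mul_Bm_add_Bm_mul_Am (ζx θ0x φx ζy θ0y φy ζ1x θ1x φ1x ζ1y θ1y φ1y : ℝ) :
    Am ζx θ0x φx * Bm ζy θ0y φy ζ1y θ1y φ1y + Bm ζx θ0x φx ζ1x θ1x φ1x * Am ζy θ0y φy =
      (ζ1x : ℂ) • (σz * (Am ζx θ0x φx * Am ζy θ0y φy)) +
        (φ1y : ℂ) • (Am ζx θ0x φx * Am ζy θ0y φy * σz) +
        (ζ1y + φ1x : ℂ) • (Am ζx θ0x φx * σz * Am ζy θ0y φy) +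
        (θ1y : ℂ) • (Am ζx θ0x φx * (σy * Rz (-(2 * ζy)) * Am ζy θ0y φy)) +
        (θ1x : ℂ) • (σy * Rz (-(2 * ζx)) * (Am ζx θ0x φx * Am ζy θ0y φy)) := by
  simp only [Bm, Matrix.mul_add, Matrix.add_mul, Matrix.mul_smul, Matrix.smul_mul, Matrix.mul_assoc]
  module

lemma anticomm_Am_Bm {ζx θ0x φx ζy θ0y φy : ℝ} (ζ1x θ1x φ1x ζ1y θ1y φ1y : ℝ) {κ : ℂ} {p : ℝ}
    (hκ : κ * κ = -1) (hA : ∀ φ, Am ζx θ0x φx * Am ζy θ0y φ = κ • (Rz (p - φ) * σy))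
    (hσz : Commute σz (Am ζx θ0x φx) ∨ Commute σz (Am ζy θ0y φy)) :
    (Am ζx θ0x φx * Am ζy θ0y φy) *
        (Am ζx θ0x φx * Bm ζy θ0y φy ζ1y θ1y φ1y + Bm ζx θ0x φx ζ1x θ1x φ1x * Am ζy θ0y φy) +
      (Am ζx θ0x φx * Bm ζy θ0y φy ζ1y θ1y φ1y + Bm ζx θ0x φx ζ1x θ1x φ1x * Am ζy θ0y φy) *
        (Am ζx θ0x φx * Am ζy θ0y φy)
    = -((θ1y : ℂ) • ((Rz (-(2 * φy)) + Rz (2 * p)) * σy))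
      - (θ1x : ℂ) • ((Rz (2 * ζx) + Rz (2 * p - 2 * ζx - 2 * φy)) * σy) := by
  set Ax := Am ζx θ0x φx
  set Ay := Am ζy θ0y φy
  have hθy_part : Ax * (σy * Rz (-(2 * ζy)) * Ay) = κ • Rz (p + φy) := by
    rw [σy_mul_Rz_mul_Am, ← Matrix.mul_assoc, hA, sub_neg_eq_add, Matrix.smul_mul, Matrix.mul_assoc,
      σy_mul_σy, Matrix.mul_one]
  have hθx_part : σy * Rz (-(2 * ζx)) * (Ax * Ay) = κ • Rz (2 * ζx - (p - φy)) := by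
    rw [hA, Matrix.mul_smul, ← Matrix.mul_assoc, Matrix.mul_assoc σy, ← Rz_add, σy_mul_Rz,
      Matrix.mul_assoc, σy_mul_σy, Matrix.mul_one, neg_add, neg_neg, ← sub_eq_add_neg]
  rw [Am_mul_Bm_add_Bm_mul_Am, hθy_part, hθx_part]
  have hanti : σz * (Ax * Ay) = -(Ax * Ay * σz) := by
    rw [hA, Matrix.smul_mul, Matrix.mul_smul, σz_mul_Rz_mul_σy, smul_neg]
  have hσzA : Ax * Ay * (σz * (Ax * Ay)) + σz * (Ax * Ay) * (Ax * Ay) = 0 := by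
    rw [hanti, Matrix.mul_neg, neg_mul, Matrix.mul_assoc _ σz, hanti, Matrix.mul_neg, neg_neg,
      neg_add_cancel]
  have hAσz : Ax * Ay * (Ax * Ay * σz) + Ax * Ay * σz * (Ax * Ay) = 0 := by
    rw [Matrix.mul_assoc _ σz, hanti, Matrix.mul_neg, add_neg_cancel]
  have hmixed : Ax * Ay * (Ax * σz * Ay) + Ax * σz * Ay * (Ax * Ay) = 0 := by
    obtain h | h : Ax * σz * Ay = σz * (Ax * Ay) ∨ Ax * σz * Ay = Ax * Ay * σz := by
      rcases hσz with h | h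
      · exact .inl (by rw [← h.eq, Matrix.mul_assoc])
      · exact .inr (by rw [Matrix.mul_assoc, h.eq, Matrix.mul_assoc])
    · rwa [h]
    · rwa [h]
  have hθy : Ax * Ay * (κ • Rz (p + φy)) + κ • Rz (p + φy) * (Ax * Ay) =
      -((Rz (-(2 * φy)) + Rz (2 * p)) * σy) := by
    rw [hA, smul_Rz_mul_σy_anticomm κ hκ, show p - φy - (p + φy) = -(2 * φy) by ring,
      show p - φy + (p + φy) = 2 * p by ring]
  have hθx : Ax * Ay * (κ • Rz (2 * ζx - (p - φy))) + κ • Rz (2 * ζx - (p - φy)) * (Ax * Ay) =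
      -((Rz (2 * ζx) + Rz (2 * p - 2 * ζx - 2 * φy)) * σy) := by
    rw [hA, smul_Rz_mul_σy_anticomm κ hκ, add_comm (Rz _), show p - φy - (2 * ζx - (p - φy)) =
      2 * p - 2 * ζx - 2 * φy by ring, show p - φy + (2 * ζx - (p - φy)) = 2 * ζx by ring]
  simp only [Matrix.mul_add, Matrix.add_mul, Matrix.mul_smul, Matrix.smul_mul] at hθy hθx ⊢
  linear_combination (norm := module)
    (ζ1x : ℂ) • hσzA + (φ1y : ℂ) • hAσz + (ζ1y + φ1x : ℂ) • hmixed +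
      (θ1y : ℂ) • hθy + (θ1x : ℂ) • hθx

lemma exists_Am_mul_Am_eq {ν : ℕ} (hν : ν = 0 ∨ ν = 1) (m t : ℤ) {θ0x θ0y : ℝ} (ζx φx ζy : ℝ)
    (hθx : θ0x = 2 * π * m + ν * π) (hθy : θ0y = 2 * π * t + (1 - (ν : ℝ)) * π) :
    ∃ κ : ℂ, κ * κ = -1 ∧
      ∀ φ, Am ζx θ0x φx * Am ζy θ0y φ = κ • (Rz (ζx + (-1) ^ ν * (φx + ζy) - φ) * σy) := by
  refine ⟨(-1) ^ m * (-1) ^ t * -I, ?_, fun φ => ?_⟩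
  · have hsign (k : ℤ) : (-1 : ℂ) ^ k * (-1) ^ k = 1 := by rw [← mul_zpow]; norm_num
    linear_combination ((-1) ^ t * (-1) ^ t * I * I : ℂ) * hsign m + (I * I) * hsign t + I_mul_I
  rcases hν with rfl | rfl
  · obtain rfl : θ0x = 2 * π * m := by simpa using hθx
    obtain rfl : θ0y = 2 * π * t + π := by simpa using hθy
    rw [Am_two_pi_mul_int, Am_two_pi_mul_int_add_pi, smul_mul_smul_comm, ← Matrix.mul_assoc,
      ← Rz_add, ← mul_assoc]
    congr 3; ring
  · obtain rfl : θ0x = 2 * π * m + π := by simpa using hθx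
    obtain rfl : θ0y = 2 * π * t := by simpa using hθy
    rw [Am_two_pi_mul_int_add_pi, Am_two_pi_mul_int, smul_mul_smul_comm, Matrix.mul_assoc,
      σy_mul_Rz, ← Matrix.mul_assoc, ← Rz_add, mul_right_comm]
    congr 3; ring

lemma commute_σz_Am_or_commute_σz_Am {ν : ℕ} (hν : ν = 0 ∨ ν = 1) (m t : ℤ) {θ0x θ0y : ℝ}
    (ζx φx ζy φy : ℝ) (hθx : θ0x = 2 * π * m + ν * π) (hθy : θ0y = 2 * π * t + (1 - (ν : ℝ)) * π) :
    Commute σz (Am ζx θ0x φx) ∨ Commute σz (Am ζy θ0y φy) := by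
  rcases hν with rfl | rfl
  · obtain rfl : θ0x = 2 * π * m := by simpa using hθx
    exact .inl (commute_σz_Am_two_pi_mul_int _ _ _)
  · obtain rfl : θ0y = 2 * π * t := by simpa using hθy
    exact .inr (commute_σz_Am_two_pi_mul_int _ _ _)

theorem stmt_13 (ν : ℕ) (hν : ν = 0 ∨ ν = 1) (m t : ℤ)
    (θ0x θ0y ζx ζy φx φy ζ1x ζ1y θ1x θ1y φ1x φ1y : ℝ)
    (hθx : θ0x = 2 * Real.pi * m + ν * Real.pi)
    (hθy : θ0y = 2 * Real.pi * t + (1 - (ν : ℝ)) * Real.pi) :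
    (Am ζx θ0x φx * Am ζy θ0y φy) *
        (Am ζx θ0x φx * Bm ζy θ0y φy ζ1y θ1y φ1y + Bm ζx θ0x φx ζ1x θ1x φ1x * Am ζy θ0y φy) +
      (Am ζx θ0x φx * Bm ζy θ0y φy ζ1y θ1y φ1y + Bm ζx θ0x φx ζ1x θ1x φ1x * Am ζy θ0y φy) *
        (Am ζx θ0x φx * Am ζy θ0y φy)
    = -((θ1y : ℂ) • ((Rz (-(2 * φy)) +
          Rz (2 * ζx + 2 * (-1 : ℝ) ^ ν * φx + 2 * (-1 : ℝ) ^ ν * ζy)) * σy))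
      - (θ1x : ℂ) • ((Rz (2 * ζx) +
          Rz (2 * (-1 : ℝ) ^ ν * ζy - 2 * φy + 2 * (-1 : ℝ) ^ ν * φx)) * σy) := by
  obtain ⟨κ, hκ, hA⟩ := exists_Am_mul_Am_eq hν m t ζx φx ζy hθx hθy
  set p := ζx + (-1 : ℝ) ^ ν * (φx + ζy)
  rw [show 2 * ζx + 2 * (-1 : ℝ) ^ ν * φx + 2 * (-1 : ℝ) ^ ν * ζy = 2 * p by ring,
    show 2 * (-1 : ℝ) ^ ν * ζy - 2 * φy + 2 * (-1 : ℝ) ^ ν * φx = 2 * p - 2 * ζx - 2 * φy by ring]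
  exact anticomm_Am_Bm ζ1x θ1x φ1x ζ1y θ1y φ1y hκ hA
    (commute_σz_Am_or_commute_σz_Am hν m t ζx φx ζy φy hθx hθy)
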